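/- arXiv:2209.06340 — 6 statements merged into one kernel-verified Lean document; each statement's English description precedes it below -/
import Mathlib

section
/- Fix η > 0 and suppose 0 ≤ c_1 ≤ ... ≤ c_n. Any optimal solution w to the program: minimize σ²·Σᵢ wᵢ² + 2/η² subject to cᵢ·wᵢ·η ≤ f(σ²·Σⱼ wⱼ² + 2/η²) − o for all i, Σᵢ wᵢ = 1, wᵢ ≥ 0, satisfies w_1 ≥ w_2 ≥ ... ≥ w_n. -/
noncomputable section

/-- Feasibility for the quasi-linear program at fixed noise parameter `η`. -/
def Feas {n : ℕ} (c : Fin n → ℝ) (σ2 o η : ℝ) (f : ℝ → ℝ) (w : Fin n → ℝ) : Prop :=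
  (∀ i, c i * w i * η ≤ f (σ2 * ∑ j, (w j) ^ 2 + 2 / η ^ 2) - o) ∧
    (∑ i, w i = 1) ∧ (∀ i, 0 ≤ w i)

/-- Any optimal solution of the quasi-linear program at fixed η > 0, with
agents ordered by nondecreasing privacy costs, has nonincreasing weights. -/
theorem optimal_weights_monotone {n : ℕ} (c : Fin n → ℝ) (σ2 o η : ℝ) (f : ℝ → ℝ)
    (hη : 0 < η) (hσ2 : 0 < σ2) (hc0 : ∀ i, 0 ≤ c i) (hc : Monotone c)
    (hf_anti : StrictAnti f) (hf_conc : ConcaveOn ℝ Set.univ f)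
    (hf_diff : Differentiable ℝ f)
    (w : Fin n → ℝ) (hfeas : Feas c σ2 o η f w)
    (hopt : ∀ v, Feas c σ2 o η f v →
      σ2 * ∑ i, (w i) ^ 2 + 2 / η ^ 2 ≤ σ2 * ∑ i, (v i) ^ 2 + 2 / η ^ 2) :
    ∀ i j : Fin n, i ≤ j → w j ≤ w i := by
  intro i j hij
  by_contra hlt
  push_neg at hlt
  have hij' : i ≠ j := by rintro rfl; exact lt_irrefl _ hlt
  obtain ⟨hcon, hsum, hpos⟩ := hfeas
  set m : ℝ := (w i + w j) / 2 with hm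
  set v : Fin n → ℝ := Function.update (Function.update w i m) j m with hv
  have hvj : v j = m := Function.update_self _ _ _
  have hvi : v i = m := by
    rw [hv, Function.update_of_ne hij', Function.update_self]
  have hvk : ∀ k, k ≠ i → k ≠ j → v k = w k := by
    intro k hki hkj
    rw [hv, Function.update_of_ne hkj, Function.update_of_ne hki]
  have hsplit : ∀ u : Fin n → ℝ,
      ∑ k, u k = u i + (u j + ∑ k ∈ (Finset.univ.erase i).erase j, u k) := by
    intro u
    rw [Finset.add_sum_erase _ u (Finset.mem_erase.mpr ⟨Ne.symm hij', Finset.mem_univ j⟩),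
      Finset.add_sum_erase _ u (Finset.mem_univ i)]
  have hrest : ∀ g : ℝ → ℝ,
      ∑ k ∈ (Finset.univ.erase i).erase j, g (v k)
        = ∑ k ∈ (Finset.univ.erase i).erase j, g (w k) := by
    intro g
    refine Finset.sum_congr rfl fun k hk => ?_
    rw [Finset.mem_erase, Finset.mem_erase] at hk
    rw [hvk k hk.2.1 hk.1]
  have hsum_v : ∑ k, v k = ∑ k, w k := by
    rw [hsplit v, hsplit w, hrest (fun x => x), hvi, hvj, hm]; ring
  have hsq_v : ∑ k, (v k) ^ 2 < ∑ k, (w k) ^ 2 := by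
    rw [hsplit (fun k => (v k) ^ 2), hsplit (fun k => (w k) ^ 2),
      hrest (fun x => x ^ 2)]
    simp only [hvi, hvj, hm]
    nlinarith [sq_nonneg (w i - w j), hlt]
  have hm0 : 0 ≤ m := by have := hpos i; have := hpos j; rw [hm]; linarith
  have hmj : m ≤ w j := by rw [hm]; linarith
  have hA : σ2 * ∑ k, (v k) ^ 2 + 2 / η ^ 2 < σ2 * ∑ k, (w k) ^ 2 + 2 / η ^ 2 := by
    nlinarith
  have hfA : f (σ2 * ∑ k, (w k) ^ 2 + 2 / η ^ 2)
      ≤ f (σ2 * ∑ k, (v k) ^ 2 + 2 / η ^ 2) := (hf_anti hA).le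
  have hfeasv : Feas c σ2 o η f v := by
    refine ⟨fun k => ?_, by rw [hsum_v]; exact hsum, fun k => ?_⟩
    · have hbase : ∀ l, c l * w l * η ≤ f (σ2 * ∑ k, (v k) ^ 2 + 2 / η ^ 2) - o :=
        fun l => le_trans (hcon l) (by linarith)
      by_cases hkj : k = j
      · subst hkj
        rw [hvj]
        refine le_trans ?_ (hbase k)
        have : c k * m ≤ c k * w k := by
          exact mul_le_mul_of_nonneg_left hmj (hc0 k)
        exact mul_le_mul_of_nonneg_right this hη.le
      · by_cases hki : k = i
        · subst hki
          rw [hvi]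
          refine le_trans ?_ (hbase j)
          have h1 : c k * m ≤ c j * w j :=
            mul_le_mul (hc hij) hmj hm0 (hc0 j)
          exact mul_le_mul_of_nonneg_right h1 hη.le
        · rw [hvk k hki hkj]; exact hbase k
    · by_cases hkj : k = j
      · subst hkj; rw [hvj]; exact hm0
      · by_cases hki : k = i
        · subst hki; rw [hvi]; exact hm0
        · rw [hvk k hki hkj]; exact hpos k
  have := hopt v hfeasv
  nlinarith
end
end

section
/- Fix η > 0 and suppose 0 ≤ c_1 ≤ ... ≤ c_n. Any optimal solution w to the program: minimize σ²·Σᵢ wᵢ² + 2/η² subject to cᵢ·wᵢ·η ≤ f(σ²·Σⱼ wⱼ² + 2/η²) − o for all i, Σᵢ wᵢ = 1, wᵢ ≥ 0, satisfies cᵢ·wᵢ ≤ cⱼ·wⱼ whenever i < j; that is, the incurred privacy costs cᵢ·wᵢ·η are monotone nondecreasing in the cost coefficient order. -/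
noncomputable section

/-- Any optimal solution of the quasi-linear program at fixed η > 0 has
incurred privacy costs monotone nondecreasing in the cost coefficient order:
cᵢ·wᵢ ≤ cⱼ·wⱼ whenever i < j. -/
theorem optimal_costs_monotone {n : ℕ} (c : Fin n → ℝ) (σ2 o η : ℝ) (f : ℝ → ℝ)
    (hη : 0 < η) (hσ2 : 0 < σ2) (hc0 : ∀ i, 0 ≤ c i) (hc : Monotone c)
    (hf_anti : StrictAnti f) (hf_conc : ConcaveOn ℝ Set.univ f)
    (hf_diff : Differentiable ℝ f)
    (w : Fin n → ℝ) (hfeas : Feas c σ2 o η f w)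
    (hopt : ∀ v, Feas c σ2 o η f v →
      σ2 * ∑ i, (w i) ^ 2 + 2 / η ^ 2 ≤ σ2 * ∑ i, (v i) ^ 2 + 2 / η ^ 2) :
    ∀ i j : Fin n, i < j → c i * w i ≤ c j * w j := by
  intro i j hij
  by_contra h
  push_neg at h
  obtain ⟨hcon, hsum, hpos⟩ := hfeas
  have hne : i ≠ j := ne_of_lt hij
  have hcij : c i ≤ c j := hc hij.le
  have hwj0 : 0 ≤ w j := hpos j
  have hcjwj : 0 ≤ c j * w j := mul_nonneg (hc0 j) hwj0
  have hciwi : 0 < c i * w i := lt_of_le_of_lt hcjwj h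
  have hci : 0 < c i := by
    rcases lt_or_ge 0 (c i) with h' | h'
    · exact h'
    · exfalso; nlinarith [hpos i]
  have hcj : 0 < c j := lt_of_lt_of_le hci hcij
  have hwi : 0 < w i := by nlinarith
  have hwij : w j < w i := by nlinarith
  set t : ℝ := min ((w i - w j) / 2) ((c i * w i - c j * w j) / c j) with ht
  have ht0 : 0 < t := lt_min (by linarith) (div_pos (by linarith) hcj)
  have ht1 : t < w i - w j :=
    lt_of_le_of_lt (min_le_left _ _) (by linarith)
  have ht2 : c j * t ≤ c i * w i - c j * w j := by
    have h2 := min_le_right ((w i - w j) / 2) ((c i * w i - c j * w j) / c j)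
    calc c j * t ≤ c j * ((c i * w i - c j * w j) / c j) :=
          mul_le_mul_of_nonneg_left h2 hcj.le
      _ = c i * w i - c j * w j := by field_simp
  set v : Fin n → ℝ := fun k => if k = i then w i - t else if k = j then w j + t else w k with hv
  have hvi : v i = w i - t := by simp [hv]
  have hvj : v j = w j + t := by simp [hv, hne.symm]
  have hvk : ∀ k, k ≠ i → k ≠ j → v k = w k := by
    intro k h1 h2; simp [hv, h1, h2]
  have hsumv : ∑ k, v k = ∑ k, w k := by
    have hvdef : ∀ k, v k = w k + ((if k = i then -t else 0) + (if k = j then t else 0)) := by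
      intro k
      by_cases hk : k = i
      · subst hk; simp [hvi, hne]; ring
      · by_cases hk' : k = j
        · subst hk'; simp [hvj, hk]
        · simp [hvk k hk hk', hk, hk']
    simp only [hvdef]
    rw [Finset.sum_add_distrib, Finset.sum_add_distrib]
    simp
  have hsq : ∑ k, (v k) ^ 2 = ∑ k, (w k) ^ 2 +
      (((w i - t) ^ 2 - (w i) ^ 2) + ((w j + t) ^ 2 - (w j) ^ 2)) := by
    have hvdef : ∀ k, (v k) ^ 2 = (w k) ^ 2 +
        ((if k = i then (w i - t) ^ 2 - (w i) ^ 2 else 0) +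
         (if k = j then (w j + t) ^ 2 - (w j) ^ 2 else 0)) := by
      intro k
      by_cases hk : k = i
      · subst hk; simp [hvi, hne]
      · by_cases hk' : k = j
        · subst hk'; simp [hvj, hk]
        · simp [hvk k hk hk', hk, hk']
    simp only [hvdef]
    rw [Finset.sum_add_distrib, Finset.sum_add_distrib]
    simp
  have hlt : ∑ k, (v k) ^ 2 < ∑ k, (w k) ^ 2 := by
    rw [hsq]; nlinarith
  have hobj : σ2 * ∑ k, (v k) ^ 2 + 2 / η ^ 2 < σ2 * ∑ k, (w k) ^ 2 + 2 / η ^ 2 := by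
    nlinarith
  have hfnew : f (σ2 * ∑ k, (w k) ^ 2 + 2 / η ^ 2) < f (σ2 * ∑ k, (v k) ^ 2 + 2 / η ^ 2) :=
    hf_anti hobj
  have hfeasv : Feas c σ2 o η f v := by
    refine ⟨fun k => ?_, hsumv.trans hsum, fun k => ?_⟩
    · by_cases hk : k = i
      · subst hk
        have he : c k * (w k - t) * η = c k * w k * η - c k * t * η := by ring
        have hp : 0 < c k * t * η := mul_pos (mul_pos hci ht0) hη
        have : c k * v k * η ≤ c k * w k * η := by rw [hvi]; linarith
        linarith [hcon k]
      · by_cases hk' : k = j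
        · subst hk'
          have he : c k * (w k + t) = c k * w k + c k * t := by ring
          have h1 : c k * (w k + t) ≤ c i * w i := by linarith
          have : c k * v k * η ≤ c i * w i * η := by
            rw [hvj]; exact mul_le_mul_of_nonneg_right h1 hη.le
          linarith [hcon i]
        · rw [hvk k hk hk']
          linarith [hcon k]
    · by_cases hk : k = i
      · subst hk; rw [hvi]; linarith
      · by_cases hk' : k = j
        · subst hk'; rw [hvj]; linarith
        · rw [hvk k hk hk']; exact hpos k
  have := hopt v hfeasv
  linarith
end
end

section
/- Fix η > 0 and suppose 0 < c_1 ≤ ... ≤ c_n. If the quasi-linear program at fixed η is feasible, then any optimal solution w has the following structure: there exist constants K ≥ 0, W ≥ 0, and an integer t ∈ {0,...,n} such that wᵢ = W for all i ≤ t and wᵢ = K/cᵢ for all i ≥ t+1. -/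
/-!
If `w i < w j` while agent `i`'s constraint is slack, moving a little weight from `j` to `i`
keeps `Σ w = 1` and `w ≥ 0`, strictly lowers `Σ w²`, and hence (as `f` is decreasing) only raises
the right-hand side `f (σ² Σ w² + 2/η²) - o` of every constraint; so the new point is feasible and
strictly better, contradicting optimality. Thus every agent whose weight is not maximal has a tight
constraint, `wᵢ = K / cᵢ` with `K = (f (…) - o) / η`. Since `c` is monotone, once some weight is
below the maximum all later ones are too: a later maximal weight `w k > w i` would give
`c k w k > c i w i = K`. The maximal weights therefore form a prefix.
-/

noncomputable section

theorem Fintype.sum_sub_sum_eq_of_eqOn_compl_pair {ι M : Type*} [Fintype ι] [AddCommGroup M]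
    {g h : ι → M} {i j : ι} (hij : i ≠ j) (hgh : ∀ k, k ≠ i ∧ k ≠ j → g k = h k) :
    ∑ k, g k - ∑ k, h k = (g i - h i) + (g j - h j) := by
  rw [← Finset.sum_sub_distrib]
  exact Fintype.sum_eq_add i j hij fun k hk => sub_eq_zero.mpr (hgh k hk)

section TransferMass

variable {ι : Type*} [DecidableEq ι]

def transferMass (w : ι → ℝ) (i j : ι) (ε : ℝ) : ι → ℝ :=
  Function.update (Function.update w j (w j - ε)) i (w i + ε)

variable {w : ι → ℝ} {i j k : ι} {ε : ℝ}

@[simp]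
theorem transferMass_left : transferMass w i j ε i = w i + ε := by
  simp [transferMass]

theorem transferMass_right (hij : i ≠ j) : transferMass w i j ε j = w j - ε := by
  simp [transferMass, hij.symm]

theorem transferMass_of_ne (hki : k ≠ i) (hkj : k ≠ j) : transferMass w i j ε k = w k := by
  simp [transferMass, hki, hkj]

theorem sum_transferMass [Fintype ι] (hij : i ≠ j) : ∑ k, transferMass w i j ε k = ∑ k, w k := by
  have h := Fintype.sum_sub_sum_eq_of_eqOn_compl_pair hij
    (g := transferMass w i j ε) (h := w) fun k hk => transferMass_of_ne hk.1 hk.2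
  rw [transferMass_left, transferMass_right hij] at h
  linarith

theorem sum_sq_transferMass [Fintype ι] (hij : i ≠ j) :
    ∑ k, transferMass w i j ε k ^ 2 = ∑ k, w k ^ 2 - 2 * ε * (w j - w i - ε) := by
  have h := Fintype.sum_sub_sum_eq_of_eqOn_compl_pair hij
    (g := fun k => transferMass w i j ε k ^ 2) (h := fun k => w k ^ 2)
    fun k hk => by simp only [transferMass_of_ne hk.1 hk.2]
  simp only [transferMass_left, transferMass_right hij] at h
  linarith

end TransferMass

section Program

variable {n : ℕ} {c : Fin n → ℝ} {σ2 o η : ℝ} {f : ℝ → ℝ} {w : Fin n → ℝ} {i j : Fin n}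
  {ε : ℝ}

theorem Feas.feas_transferMass (hfeas : Feas c σ2 o η f w) (hf : Antitone f) (hσ2 : 0 ≤ σ2)
    (hc : ∀ k, 0 ≤ c k) (hη : 0 ≤ η) (hij : i ≠ j) (hε : 0 ≤ ε) (hεj : ε ≤ w j - w i)
    (hi : c i * (w i + ε) * η ≤ f (σ2 * ∑ k, w k ^ 2 + 2 / η ^ 2) - o) :
    Feas c σ2 o η f (transferMass w i j ε) := by
  obtain ⟨hcon, hsum, hw⟩ := hfeas
  have hrhs : f (σ2 * ∑ k, w k ^ 2 + 2 / η ^ 2) ≤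
      f (σ2 * ∑ k, transferMass w i j ε k ^ 2 + 2 / η ^ 2) := by
    refine hf ?_
    rw [sum_sq_transferMass hij]
    nlinarith [mul_nonneg hσ2 (mul_nonneg hε (sub_nonneg.mpr hεj))]
  refine ⟨fun k => le_trans ?_ (sub_le_sub_right hrhs o), (sum_transferMass hij).trans hsum,
    fun k => ?_⟩
  · rcases eq_or_ne k i with rfl | hki
    · simpa using hi
    rcases eq_or_ne k j with rfl | hkj
    · rw [transferMass_right hij]
      refine le_trans ?_ (hcon k)
      have := hc k
      gcongr
      linarith
    · rw [transferMass_of_ne hki hkj]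
      exact hcon k
  · rcases eq_or_ne k i with rfl | hki
    · simpa using add_nonneg (hw k) hε
    rcases eq_or_ne k j with rfl | hkj
    · rw [transferMass_right hij]
      linarith [hw i]
    · rw [transferMass_of_ne hki hkj]
      exact hw k

theorem Feas.constraint_eq_of_lt (hfeas : Feas c σ2 o η f w)
    (hopt : ∀ v, Feas c σ2 o η f v →
      σ2 * ∑ i, (w i) ^ 2 + 2 / η ^ 2 ≤ σ2 * ∑ i, (v i) ^ 2 + 2 / η ^ 2)
    (hf : Antitone f) (hσ2 : 0 < σ2) (hc : ∀ k, 0 < c k) (hη : 0 < η) (hlt : w i < w j) :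
    c i * w i * η = f (σ2 * ∑ k, w k ^ 2 + 2 / η ^ 2) - o := by
  by_contra hne
  set slack := f (σ2 * ∑ k, w k ^ 2 + 2 / η ^ 2) - o - c i * w i * η
  have hslack : 0 < slack := sub_pos.mpr ((hfeas.1 i).lt_of_ne hne)
  have hciη : 0 < c i * η := mul_pos (hc i) hη
  set ε := min ((w j - w i) / 2) (slack / (c i * η))
  have hε : 0 < ε := lt_min (by linarith) (div_pos hslack hciη)
  have hεj : ε ≤ (w j - w i) / 2 := min_le_left _ _
  have hεi : c i * ε * η ≤ slack := by
    have := (le_div_iff₀ hciη).mp (min_le_right ((w j - w i) / 2) (slack / (c i * η)))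
    linarith
  have hij : i ≠ j := ne_of_apply_ne w hlt.ne
  have hfeas' := hfeas.feas_transferMass hf hσ2.le (fun k => (hc k).le) hη.le hij hε.le
    (by linarith) (by linarith)
  have hle := hopt _ hfeas'
  rw [sum_sq_transferMass hij] at hle
  nlinarith [mul_pos hσ2 (mul_pos hε (show 0 < w j - w i - ε by linarith))]

end Program

theorem lt_of_lt_of_index_le {ι : Type*} [Preorder ι] {c w : ι → ℝ} {B : ℝ}
    (hcm : Monotone c) (hc : ∀ i, 0 < c i) (hw : ∀ i, 0 ≤ w i) (hcap : ∀ i, c i * w i ≤ B)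
    (htight : ∀ i j, w i < w j → c i * w i = B) {i j k : ι} (hij : w i < w j) (hik : i ≤ k) :
    w k < w j := by
  by_contra! hjk
  have hwik : w i < w k := hij.trans_le hjk
  refine lt_irrefl B ?_
  calc B = c i * w i := (htight i k hwik).symm
    _ < c i * w k := mul_lt_mul_of_pos_left hwik (hc i)
    _ ≤ c k * w k := mul_le_mul_of_nonneg_right (hcm hik) (hw k)
    _ ≤ B := hcap k

theorem exists_const_prefix_div_suffix {n : ℕ} {c w : Fin n → ℝ} {B : ℝ}
    (hcm : Monotone c) (hc : ∀ i, 0 < c i) (hw : ∀ i, 0 ≤ w i) (hcap : ∀ i, c i * w i ≤ B)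
    (htight : ∀ i j, w i < w j → c i * w i = B) :
    ∃ (K W : ℝ) (t : ℕ), 0 ≤ K ∧ 0 ≤ W ∧ t ≤ n ∧
      (∀ i : Fin n, (i : ℕ) < t → w i = W) ∧
      (∀ i : Fin n, t ≤ (i : ℕ) → w i = K / c i) := by
  rcases isEmpty_or_nonempty (Fin n) with hn | hn
  · exact ⟨0, 0, 0, le_rfl, le_rfl, Nat.zero_le n, fun i => isEmptyElim i, fun i => isEmptyElim i⟩
  obtain ⟨jmax, hjmax⟩ := Finite.exists_max w
  have hex : ∃ m, m = n ∨ ∃ i : Fin n, (i : ℕ) = m ∧ w i < w jmax := ⟨n, Or.inl rfl⟩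
  refine ⟨B, w jmax, Nat.find hex, (mul_nonneg (hc jmax).le (hw jmax)).trans (hcap jmax),
    hw jmax, Nat.find_le (Or.inl rfl), fun i hi => ?_, fun i hi => ?_⟩
  · have := Nat.find_min hex hi
    simp only [not_or, not_exists, not_and, not_lt] at this
    exact le_antisymm (hjmax i) (this.2 i rfl)
  · obtain hfind | ⟨i₀, hi₀, hlt⟩ := Nat.find_spec hex
    · omega
    have hlt' := lt_of_lt_of_index_le hcm hc hw hcap htight (k := i) hlt
      (Fin.le_def.mpr (by omega))
    rw [eq_div_iff (hc i).ne', mul_comm]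
    exact htight i jmax hlt'

theorem optimal_structure_general {n : ℕ} (c : Fin n → ℝ) (σ2 o η : ℝ) (f : ℝ → ℝ)
    (hη : 0 < η) (hσ2 : 0 < σ2) (hc : ∀ i, 0 < c i) (hcm : Monotone c)
    (hf_anti : StrictAnti f)
    (w : Fin n → ℝ) (hfeas : Feas c σ2 o η f w)
    (hopt : ∀ v, Feas c σ2 o η f v →
      σ2 * ∑ i, (w i) ^ 2 + 2 / η ^ 2 ≤ σ2 * ∑ i, (v i) ^ 2 + 2 / η ^ 2) :
    ∃ (K W : ℝ) (t : ℕ), 0 ≤ K ∧ 0 ≤ W ∧ t ≤ n ∧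
      (∀ i : Fin n, (i : ℕ) < t → w i = W) ∧
      (∀ i : Fin n, t ≤ (i : ℕ) → w i = K / c i) := by
  refine exists_const_prefix_div_suffix (B := (f (σ2 * ∑ k, w k ^ 2 + 2 / η ^ 2) - o) / η)
    hcm hc hfeas.2.2 (fun i => ?_) (fun i j hij => ?_)
  · rw [le_div_iff₀ hη]
    exact hfeas.1 i
  · rw [eq_div_iff hη.ne']
    exact hfeas.constraint_eq_of_lt hopt hf_anti.antitone hσ2 hc hη hij

/-- Structure of the optimal solution of the quasi-linear program at fixed
η > 0 with 0 < c₁ ≤ ... ≤ cₙ: there exist K ≥ 0, W ≥ 0 and t ∈ {0,...,n} such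
that wᵢ = W for the first t agents and wᵢ = K/cᵢ for the remaining agents. -/
theorem optimal_structure {n : ℕ} (c : Fin n → ℝ) (σ2 o η : ℝ) (f : ℝ → ℝ)
    (hη : 0 < η) (hσ2 : 0 < σ2) (hc : ∀ i, 0 < c i) (hcm : Monotone c)
    (hf_anti : StrictAnti f) (hf_conc : ConcaveOn ℝ Set.univ f)
    (hf_diff : Differentiable ℝ f)
    (hfeasible : ∃ v, Feas c σ2 o η f v)
    (w : Fin n → ℝ) (hfeas : Feas c σ2 o η f w)
    (hopt : ∀ v, Feas c σ2 o η f v →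
      σ2 * ∑ i, (w i) ^ 2 + 2 / η ^ 2 ≤ σ2 * ∑ i, (v i) ^ 2 + 2 / η ^ 2) :
    ∃ (K W : ℝ) (t : ℕ), 0 ≤ K ∧ 0 ≤ W ∧ t ≤ n ∧
      (∀ i : Fin n, (i : ℕ) < t → w i = W) ∧
      (∀ i : Fin n, t ≤ (i : ℕ) → w i = K / c i) :=
  optimal_structure_general c σ2 o η f hη hσ2 hc hcm hf_anti w hfeas hopt
end
end

section
/- In the privacy-constrained model, fix η > 0 and thresholds τ_1 ≥ τ_2 ≥ ... ≥ τ_n > 0. Any optimal solution w to the program: minimize σ²·Σᵢ wᵢ² + 2/η² subject to wᵢ·η ≤ τᵢ for all i, Σᵢ wᵢ = 1, wᵢ ≥ 0, satisfies wᵢ > 0 for all i. -/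
noncomputable section

/-- Feasibility for the privacy-constrained program at fixed noise `η`. -/
def FeasT {n : ℕ} (τ : Fin n → ℝ) (η : ℝ) (w : Fin n → ℝ) : Prop :=
  (∀ i, w i * η ≤ τ i) ∧ (∑ i, w i = 1) ∧ (∀ i, 0 ≤ w i)

/-- In the privacy-constrained model at fixed η > 0 with thresholds
τ₁ ≥ ... ≥ τₙ > 0, any optimal solution has all weights strictly positive. -/
theorem pc_full_participation {n : ℕ} (τ : Fin n → ℝ) (σ2 η : ℝ)
    (hη : 0 < η) (hσ2 : 0 < σ2) (hτpos : ∀ i, 0 < τ i) (hτanti : Antitone τ)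
    (w : Fin n → ℝ) (hfeas : FeasT τ η w)
    (hopt : ∀ v, FeasT τ η v →
      σ2 * ∑ i, (w i) ^ 2 + 2 / η ^ 2 ≤ σ2 * ∑ i, (v i) ^ 2 + 2 / η ^ 2) :
    ∀ i : Fin n, 0 < w i := by
  obtain ⟨hcon, hsum, hnn⟩ := hfeas
  intro i
  by_contra hle
  push_neg at hle
  have hwi : w i = 0 := le_antisymm hle (hnn i)
  -- find j with w j > 0
  have hj : ∃ j, 0 < w j := by
    by_contra hall
    push_neg at hall
    have : (∑ k, w k) ≤ 0 := Finset.sum_nonpos (fun k _ => hall k)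
    linarith [hsum]
  obtain ⟨j, hwj⟩ := hj
  have hji : j ≠ i := by
    intro h; rw [h, hwi] at hwj; exact lt_irrefl _ hwj
  set ε : ℝ := min (w j) (τ i / η) / 2 with hε
  have hτiη : 0 < τ i / η := div_pos (hτpos i) hη
  have hεpos : 0 < ε := by positivity
  have hεwj : ε < w j := by
    have : ε ≤ w j / 2 := by
      apply div_le_div_of_nonneg_right (min_le_left _ _)
      norm_num
    linarith
  have hετ : ε * η ≤ τ i := by
    have h1 : ε ≤ τ i / η := by
      have : ε ≤ (τ i / η) / 2 := by
        apply div_le_div_of_nonneg_right (min_le_right _ _)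
        norm_num
      linarith
    calc ε * η ≤ (τ i / η) * η := by nlinarith
    _ = τ i := by field_simp
  set v : Fin n → ℝ := fun k => if k = i then ε else if k = j then w j - ε else w k with hv
  have hvi : v i = ε := by simp [hv]
  have hvj : v j = w j - ε := by simp [hv, hji]
  have hvk : ∀ k, k ≠ i → k ≠ j → v k = w k := by
    intro k h1 h2; simp [hv, h1, h2]
  have key : ∀ f : Fin n → ℝ, ∑ k, f k = f i + (f j + ∑ k ∈ (Finset.univ.erase i).erase j, f k) := by
    intro f
    rw [← Finset.add_sum_erase _ f (Finset.mem_univ i),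
        ← Finset.add_sum_erase _ f (Finset.mem_erase.mpr ⟨hji, Finset.mem_univ j⟩)]
  have hrest : ∀ g h : Fin n → ℝ, (∀ k, k ≠ i → k ≠ j → g k = h k) →
      ∑ k ∈ (Finset.univ.erase i).erase j, g k = ∑ k ∈ (Finset.univ.erase i).erase j, h k := by
    intro g h hgh
    apply Finset.sum_congr rfl
    intro k hk
    simp only [Finset.mem_erase, Finset.mem_univ] at hk
    exact hgh k hk.2.1 hk.1
  have hfeasv : FeasT τ η v := by
    refine ⟨?_, ?_, ?_⟩
    · intro k
      by_cases h1 : k = i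
      · subst h1; rw [hvi]; exact hετ
      · by_cases h2 : k = j
        · rw [h2, hvj]
          calc (w j - ε) * η ≤ w j * η := by nlinarith
          _ ≤ τ j := hcon j
        · rw [hvk k h1 h2]; exact hcon k
    · rw [key v, hvi, hvj, hrest v w hvk]
      rw [key w, hwi] at hsum
      linarith
    · intro k
      by_cases h1 : k = i
      · subst h1; rw [hvi]; exact hεpos.le
      · by_cases h2 : k = j
        · rw [h2, hvj]; linarith
        · rw [hvk k h1 h2]; exact hnn k
  have hlt : ∑ k, v k ^ 2 < ∑ k, w k ^ 2 := by
    rw [key (fun k => v k ^ 2), key (fun k => w k ^ 2)]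
    simp only [hvi, hvj, hwi]
    have : ∑ k ∈ (Finset.univ.erase i).erase j, v k ^ 2
        = ∑ k ∈ (Finset.univ.erase i).erase j, w k ^ 2 := by
      apply hrest
      intro k h1 h2; rw [hvk k h1 h2]
    rw [this]
    nlinarith
  have := hopt v hfeasv
  nlinarith
end
end

section
/- In the privacy-constrained model, fix η > 0 and thresholds τ_1 ≥ ... ≥ τ_n > 0. Any optimal solution w to the program: minimize σ²·Σᵢ wᵢ² + 2/η² subject to wᵢ·η ≤ τᵢ for all i, Σᵢ wᵢ = 1, wᵢ ≥ 0, satisfies both w_1 ≥ w_2 ≥ ... ≥ w_n and w_1/τ_1 ≤ w_2/τ_2 ≤ ... ≤ w_n/τ_n. -/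
noncomputable section

lemma sum_diff_two {n : ℕ} (g w : Fin n → ℝ) (i j : Fin n) (hij : i ≠ j)
    (h : ∀ k, k ≠ i → k ≠ j → g k = w k) :
    ∑ k, g k = ∑ k, w k - w i - w j + g i + g j := by
  have h1 : ∑ k, (g k - w k) = ∑ k ∈ ({i, j} : Finset (Fin n)), (g k - w k) := by
    refine (Finset.sum_subset (Finset.subset_univ _) ?_).symm
    intro k _ hk
    simp only [Finset.mem_insert, Finset.mem_singleton, not_or] at hk
    rw [h k hk.1 hk.2]; ring
  rw [Finset.sum_pair hij, Finset.sum_sub_distrib] at h1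
  linarith

/-- In the privacy-constrained model at fixed η > 0 with thresholds
τ₁ ≥ ... ≥ τₙ > 0, any optimal solution satisfies w₁ ≥ ... ≥ wₙ and
w₁/τ₁ ≤ ... ≤ wₙ/τₙ. -/
theorem pc_monotonicity {n : ℕ} (τ : Fin n → ℝ) (σ2 η : ℝ)
    (hη : 0 < η) (hσ2 : 0 < σ2) (hτpos : ∀ i, 0 < τ i) (hτanti : Antitone τ)
    (w : Fin n → ℝ) (hfeas : FeasT τ η w)
    (hopt : ∀ v, FeasT τ η v →
      σ2 * ∑ i, (w i) ^ 2 + 2 / η ^ 2 ≤ σ2 * ∑ i, (v i) ^ 2 + 2 / η ^ 2) :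
    (∀ i j : Fin n, i ≤ j → w j ≤ w i) ∧
      (∀ i j : Fin n, i ≤ j → w i / τ i ≤ w j / τ j) := by
  obtain ⟨hcon, hsum, hnn⟩ := hfeas
  have part1 : ∀ i j : Fin n, i ≤ j → w j ≤ w i := by
    intro i j hij
    by_contra hlt
    push_neg at hlt
    have hne : i ≠ j := by rintro rfl; exact lt_irrefl _ hlt
    set m : ℝ := (w i + w j) / 2 with hm
    set v : Fin n → ℝ := fun k => if k = i then m else if k = j then m else w k with hv
    have hvi : v i = m := by simp [hv]
    have hvj : v j = m := by simp [hv, hne.symm]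
    have hvo : ∀ k, k ≠ i → k ≠ j → v k = w k := by
      intro k h1 h2; simp [hv, h1, h2]
    have hτji : τ j ≤ τ i := hτanti hij
    have hmlt : m < w j := by simp [hm]; linarith
    have hmnn : 0 ≤ m := by have := hnn i; have := hnn j; simp [hm]; linarith
    have hfv : FeasT τ η v := by
      refine ⟨fun k => ?_, ?_, fun k => ?_⟩
      · by_cases h1 : k = i
        · rw [h1, hvi]
          have := hcon j
          nlinarith
        · by_cases h2 : k = j
          · rw [h2, hvj]
            have := hcon j
            nlinarith
          · rw [hvo k h1 h2]; exact hcon k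
      · rw [sum_diff_two v w i j hne hvo, hvi, hvj, hsum, hm]; ring
      · by_cases h1 : k = i
        · rw [h1, hvi]; exact hmnn
        · by_cases h2 : k = j
          · rw [h2, hvj]; exact hmnn
          · rw [hvo k h1 h2]; exact hnn k
    have hsq : ∑ k, (v k) ^ 2 < ∑ k, (w k) ^ 2 := by
      have := sum_diff_two (fun k => (v k) ^ 2) (fun k => (w k) ^ 2) i j hne
        (by intro k h1 h2; simp [hvo k h1 h2])
      rw [this, hvi, hvj, hm]
      nlinarith [sq_nonneg (w i - w j)]
    have := hopt v hfv
    nlinarith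
  refine ⟨part1, ?_⟩
  intro i j hij
  by_contra hlt
  push_neg at hlt
  have hτji : τ j ≤ τ i := hτanti hij
  have hτi := hτpos i
  have hτj := hτpos j
  have hwji : w j ≤ w i := part1 i j hij
  have hd : w j * τ i < w i * τ j := by
    rw [div_lt_div_iff₀ hτj hτi] at hlt; linarith
  have hwlt : w j < w i := by
    rcases lt_or_eq_of_le hwji with h | h
    · exact h
    · exfalso; rw [h] at hd; nlinarith [hnn j]
  have hne : i ≠ j := by rintro rfl; exact lt_irrefl _ hwlt
  have hslack : w j * η < τ j := by
    have hci := hcon i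
    nlinarith [hnn j, mul_pos hτi hτj]
  set ε : ℝ := min ((τ j - w j * η) / η) ((w i - w j) / 2) with hε
  have hεpos : 0 < ε := by
    apply lt_min
    · exact div_pos (by linarith) hη
    · linarith
  have hε1 : ε * η ≤ τ j - w j * η := by
    have := min_le_left ((τ j - w j * η) / η) ((w i - w j) / 2)
    rw [← hε] at this
    calc ε * η ≤ (τ j - w j * η) / η * η := by nlinarith
    _ = τ j - w j * η := by field_simp
  have hε2 : ε ≤ (w i - w j) / 2 := min_le_right _ _
  set v : Fin n → ℝ := fun k => if k = i then w i - ε else if k = j then w j + ε else w k with hv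
  have hvi : v i = w i - ε := by simp [hv]
  have hvj : v j = w j + ε := by simp [hv, hne.symm]
  have hvo : ∀ k, k ≠ i → k ≠ j → v k = w k := by
    intro k h1 h2; simp [hv, h1, h2]
  have hfv : FeasT τ η v := by
    refine ⟨fun k => ?_, ?_, fun k => ?_⟩
    · by_cases h1 : k = i
      · rw [h1, hvi]
        have := hcon i
        nlinarith
      · by_cases h2 : k = j
        · rw [h2, hvj]; nlinarith
        · rw [hvo k h1 h2]; exact hcon k
    · rw [sum_diff_two v w i j hne hvo, hvi, hvj, hsum]; ring
    · by_cases h1 : k = i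
      · rw [h1, hvi]
        have := hnn j
        linarith
      · by_cases h2 : k = j
        · rw [h2, hvj]
          have := hnn j
          linarith
        · rw [hvo k h1 h2]; exact hnn k
  have hsq : ∑ k, (v k) ^ 2 < ∑ k, (w k) ^ 2 := by
    have := sum_diff_two (fun k => (v k) ^ 2) (fun k => (w k) ^ 2) i j hne
      (by intro k h1 h2; simp [hvo k h1 h2])
    rw [this, hvi, hvj]
    nlinarith
  have := hopt v hfv
  nlinarith
end
end

section
/- In the privacy-constrained model, fix η > 0 and thresholds τ_1 ≥ ... ≥ τ_n > 0, and suppose the program minimizing σ²·Σᵢ wᵢ² + 2/η² subject to wᵢ·η ≤ τᵢ, Σᵢ wᵢ = 1, wᵢ ≥ 0 is feasible. Then any optimal solution w has the structure: there exists t ∈ {0,...,n} and W ≥ 0 with wᵢ = W for all i ≤ t and wᵢ = τᵢ/η for all i ≥ t+1. -/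
noncomputable section

/-!
Moving a small mass `ε` from a larger weight `w j` to a smaller weight `w i` keeps the sum and
strictly decreases `∑ w²`, and it stays feasible as long as the cap `wᵢ η ≤ τᵢ` is slack. Hence at
an optimum every weight below the maximum sits at its cap. Since the caps `τᵢ / η` decrease, this
forces the weights to be antitone, so the agents at the maximal weight `W` form an initial segment
and all later agents are capped.
-/

open Finset Function

theorem Fintype.sum_comp_update {ι β M : Type*} [Fintype ι] [DecidableEq ι] [AddCommGroup M]
    (g : β → M) (f : ι → β) (i : ι) (b : β) :
    ∑ k, g (update f i b k) = ∑ k, g (f k) - g (f i) + g b := by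
  have h := Finset.sum_update_of_mem (mem_univ i) (g ∘ f) (g b)
  rw [← comp_update, ← compl_eq_univ_sdiff] at h
  rw [show ∑ k, g (update f i b k) = ∑ k, (g ∘ update f i b) k from rfl, h,
    Fintype.sum_eq_add_sum_compl i (fun k => g (f k))]
  simp only [comp_apply]
  abel

def transfer {ι : Type*} [DecidableEq ι] (w : ι → ℝ) (i j : ι) (ε : ℝ) : ι → ℝ :=
  update (update w i (w i + ε)) j (w j - ε)

section Transfer

variable {ι : Type*} [DecidableEq ι] {w : ι → ℝ} {i j : ι} {ε : ℝ}

theorem transfer_apply_left (hij : i ≠ j) : transfer w i j ε i = w i + ε := by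
  simp [transfer, hij]

theorem transfer_apply_right : transfer w i j ε j = w j - ε := by
  simp [transfer]

theorem transfer_apply_of_ne {k : ι} (hki : k ≠ i) (hkj : k ≠ j) : transfer w i j ε k = w k := by
  simp [transfer, hki, hkj]

theorem sum_comp_transfer [Fintype ι] (hij : i ≠ j) (g : ℝ → ℝ) :
    ∑ k, g (transfer w i j ε k) =
      ∑ k, g (w k) - g (w i) - g (w j) + g (w i + ε) + g (w j - ε) := by
  rw [transfer, Fintype.sum_comp_update, Fintype.sum_comp_update, update_of_ne hij.symm]
  abel

theorem sum_transfer [Fintype ι] (hij : i ≠ j) : ∑ k, transfer w i j ε k = ∑ k, w k := by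
  have h := sum_comp_transfer (w := w) (ε := ε) hij id
  simp only [id] at h
  rw [h]
  ring

theorem sum_sq_transfer_lt [Fintype ι] (hij : i ≠ j) (hε : 0 < ε) (hεw : ε < w j - w i) :
    ∑ k, transfer w i j ε k ^ 2 < ∑ k, w k ^ 2 := by
  rw [sum_comp_transfer hij (· ^ 2)]
  nlinarith

end Transfer

section Optimality

variable {n : ℕ} {τ : Fin n → ℝ} {η : ℝ} {w : Fin n → ℝ}

theorem FeasT.feasT_transfer {i j : Fin n} {ε : ℝ} (hw : FeasT τ η w) (hη : 0 ≤ η) (hij : i ≠ j)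
    (hε : 0 ≤ ε) (hεw : ε ≤ w j) (hi : (w i + ε) * η ≤ τ i) : FeasT τ η (transfer w i j ε) := by
  obtain ⟨hcap, hsum, hnonneg⟩ := hw
  refine ⟨fun k => ?_, (sum_transfer hij).trans hsum, fun k => ?_⟩
  · rcases eq_or_ne k i with rfl | hki
    · rwa [transfer_apply_left hij]
    rcases eq_or_ne k j with rfl | hkj
    · rw [transfer_apply_right]
      nlinarith [hcap k]
    · rw [transfer_apply_of_ne hki hkj]
      exact hcap k
  · rcases eq_or_ne k i with rfl | hki
    · rw [transfer_apply_left hij]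
      linarith [hnonneg k]
    rcases eq_or_ne k j with rfl | hkj
    · rw [transfer_apply_right]
      linarith
    · rw [transfer_apply_of_ne hki hkj]
      exact hnonneg k

theorem FeasT.mul_eq_of_lt (hw : FeasT τ η w) (hη : 0 < η)
    (hmin : IsMinOn (fun v => ∑ k, v k ^ 2) {v | FeasT τ η v} w) {i j : Fin n}
    (hij : w i < w j) : w i * η = τ i := by
  by_contra hslack
  have hgap : 0 < τ i / η - w i := by
    rw [sub_pos, lt_div_iff₀ hη]
    exact lt_of_le_of_ne (hw.1 i) hslack
  set ε := min (τ i / η - w i) ((w j - w i) / 2)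
  have hε : 0 < ε := lt_min hgap (by linarith)
  have hεi : w i + ε ≤ τ i / η := by linarith [min_le_left (τ i / η - w i) ((w j - w i) / 2)]
  have hεj : ε < w j - w i := by linarith [min_le_right (τ i / η - w i) ((w j - w i) / 2)]
  have hne : i ≠ j := ne_of_apply_ne w hij.ne
  have hfeas : FeasT τ η (transfer w i j ε) :=
    hw.feasT_transfer hη.le hne hε.le (by linarith [hw.2.2 i]) ((le_div_iff₀ hη).mp hεi)
  exact (sum_sq_transfer_lt hne hε hεj).not_ge (hmin hfeas)

theorem FeasT.antitone_of_isMinOn (hw : FeasT τ η w) (hη : 0 < η) (hτ : Antitone τ)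
    (hmin : IsMinOn (fun v => ∑ k, v k ^ 2) {v | FeasT τ η v} w) : Antitone w := by
  intro i j hle
  by_contra! hlt
  have htight := hw.mul_eq_of_lt hη hmin hlt
  have : w j * η ≤ w i * η := htight ▸ (hw.1 j).trans (hτ hle)
  exact hlt.not_ge (le_of_mul_le_mul_right this hη)

end Optimality

theorem Fin.exists_mem_iff_lt_of_isLowerSet {n : ℕ} {s : Set (Fin n)} (hs : IsLowerSet s) :
    ∃ t ≤ n, ∀ i : Fin n, i ∈ s ↔ (i : ℕ) < t := by
  classical
  have hex : ∃ t, ∀ i ∈ s, (i : ℕ) < t := ⟨n, fun i _ => i.isLt⟩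
  refine ⟨Nat.find hex, Nat.find_min' hex fun i _ => i.isLt, fun i => ⟨Nat.find_spec hex i, ?_⟩⟩
  intro hi
  obtain ⟨j, hj, hij⟩ := not_forall₂.mp (Nat.find_min hex hi)
  exact hs (not_lt.mp hij) hj

theorem pc_optimal_structure_general {n : ℕ} (τ : Fin n → ℝ) (σ2 η : ℝ)
    (hη : 0 < η) (hσ2 : 0 < σ2) (hτanti : Antitone τ)
    (w : Fin n → ℝ) (hfeas : FeasT τ η w)
    (hopt : ∀ v, FeasT τ η v →
      σ2 * ∑ i, (w i) ^ 2 + 2 / η ^ 2 ≤ σ2 * ∑ i, (v i) ^ 2 + 2 / η ^ 2) :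
    ∃ (t : ℕ) (W : ℝ), t ≤ n ∧ 0 ≤ W ∧
      (∀ i : Fin n, (i : ℕ) < t → w i = W) ∧
      (∀ i : Fin n, t ≤ (i : ℕ) → w i = τ i / η) := by
  have hmin : IsMinOn (fun v => ∑ k, v k ^ 2) {v | FeasT τ η v} w := fun v hv =>
    le_of_mul_le_mul_left (le_of_add_le_add_right (hopt v hv)) hσ2
  have hn : 0 < n := Nat.pos_of_ne_zero fun h => by subst h; simpa using hfeas.2.1
  let i₀ : Fin n := ⟨0, hn⟩
  have hanti := hfeas.antitone_of_isMinOn hη hτanti hmin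
  have hmax : ∀ i, w i ≤ w i₀ := fun i => hanti (show i₀ ≤ i from Nat.zero_le _)
  have hlower : IsLowerSet {i | w i = w i₀} := fun i j hji hi =>
    le_antisymm (hmax j) (hi ▸ hanti hji)
  obtain ⟨t, htn, ht⟩ := Fin.exists_mem_iff_lt_of_isLowerSet hlower
  refine ⟨t, w i₀, htn, hfeas.2.2 i₀, fun i hi => (ht i).2 hi, fun i hi => ?_⟩
  have hlt : w i < w i₀ := (hmax i).lt_of_ne fun h => hi.not_gt ((ht i).1 h)
  exact eq_div_of_mul_eq hη.ne' (hfeas.mul_eq_of_lt hη hmin hlt)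

/-- Structure of the optimal solution of the privacy-constrained program at
fixed η > 0 with τ₁ ≥ ... ≥ τₙ > 0: there exist t ∈ {0,...,n} and W ≥ 0 with
wᵢ = W for the first t agents and wᵢ = τᵢ/η for the remaining agents. -/
theorem pc_optimal_structure {n : ℕ} (τ : Fin n → ℝ) (σ2 η : ℝ)
    (hη : 0 < η) (hσ2 : 0 < σ2) (hτpos : ∀ i, 0 < τ i) (hτanti : Antitone τ)
    (hfeasible : ∃ v, FeasT τ η v)
    (w : Fin n → ℝ) (hfeas : FeasT τ η w)
    (hopt : ∀ v, FeasT τ η v →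
      σ2 * ∑ i, (w i) ^ 2 + 2 / η ^ 2 ≤ σ2 * ∑ i, (v i) ^ 2 + 2 / η ^ 2) :
    ∃ (t : ℕ) (W : ℝ), t ≤ n ∧ 0 ≤ W ∧
      (∀ i : Fin n, (i : ℕ) < t → w i = W) ∧
      (∀ i : Fin n, t ≤ (i : ℕ) → w i = τ i / η) :=
  pc_optimal_structure_general τ σ2 η hη hσ2 hτanti w hfeas hopt
end
end
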